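/- arXiv:1605.09465 — 7 statements merged into one kernel-verified Lean document; each statement's English description precedes it below -/
import Mathlib

section
/- Let V be a finite set and let G = (V,E) be a connected simple undirected graph with Laplacian matrix L (L_{ii} = deg(i), L_{ij} = -1 if {i,j} ∈ E, and L_{ij} = 0 otherwise). For a nonempty subset S ⊆ V, let L_ff(S) denote the principal submatrix of L obtained by deleting the rows and columns indexed by S; for connected G and nonempty S, L_ff(S) is positive definite, hence invertible. Then the noise-robustness metric R(S) = trace(L_ff(S)^{-1}) is monotone nonincreasing and supermodular on nonempty subsets of V: for all nonempty S ⊆ T ⊆ V and all v ∈ V \ T, R(S) - R(S ∪ {v}) ≥ R(T) - R(T ∪ {v}), and R(S) ≥ R(T). -/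
/-!
Fix `c > 0` with `c * trace L ≤ 1` and put `P = 1 - c L`, an entrywise nonnegative matrix. For
nonempty `S` the matrix `L_ff(S)` is positive definite with eigenvalues in `(0, 1/c]`, so the
Neumann series gives `R(S) = c ∑ₖ trace((1 - c L_ff(S))ᵏ) = c ∑ₖ trace((P D_S)ᵏ D_S)`, where
`D_S = diagCompl S` is the diagonal 0/1 matrix of `V \ S`. As a function of `S`, `D_S` is
entrywise nonnegative, antitone and modular. Being nonnegative, antitone and supermodular survives
sums, products and limits, so it passes from `D_S` to every term of the series and then to `R`.
-/

open Matrix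

/-- The grounded Laplacian `L_ff(S)`: the principal submatrix of the Laplacian of `G`
obtained by deleting the rows and columns indexed by `S`. -/
noncomputable def Lff {V : Type*} [Fintype V] [DecidableEq V]
    (G : SimpleGraph V) [DecidableRel G.Adj] (S : Finset V) :
    Matrix {i : V // i ∉ S} {i : V // i ∉ S} ℝ :=
  (G.lapMatrix ℝ).submatrix (Subtype.val) (Subtype.val)

/-- The noise-robustness metric `R(S) = trace(L_ff(S)⁻¹)`. -/
noncomputable def noiseMetric {V : Type*} [Fintype V] [DecidableEq V]
    (G : SimpleGraph V) [DecidableRel G.Adj] (S : Finset V) : ℝ :=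
  Matrix.trace ((Lff G S)⁻¹)

/-- `a, a', b, b'` stand for `f S, f (S ∪ {v}), f T, f (T ∪ {v})` with `S ⊆ T`, for a nonnegative,
antitone, supermodular set function `f`. -/
structure IsSupermodularSquare {α : Type*} [Ring α] [PartialOrder α] (a a' b b' : α) : Prop where
  nonneg : 0 ≤ b'
  le_left : b' ≤ b
  le_right : b' ≤ a'
  sub_le_sub : b - b' ≤ a - a'

namespace IsSupermodularSquare

variable {α : Type*} [Ring α] [PartialOrder α] {a a' b b' c c' d d' : α}
  {n : Type*} {A A' B B' C C' D D' : Matrix n n α}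

theorem const (ha : 0 ≤ a) : IsSupermodularSquare a a a a :=
  ⟨ha, le_rfl, le_rfl, le_rfl⟩

theorem matrix_diagonal [DecidableEq n] {d d' e e' : n → α}
    (h : ∀ i, IsSupermodularSquare (d i) (d' i) (e i) (e' i)) (i j : n) :
    IsSupermodularSquare (diagonal d i j) (diagonal d' i j) (diagonal e i j) (diagonal e' i j) := by
  by_cases hij : i = j
  · subst hij
    simpa using h i
  · simpa [hij] using const le_rfl

variable [IsOrderedRing α]

theorem le (h : IsSupermodularSquare a a' b b') : b ≤ a := by
  simpa only [add_sub_cancel] using add_le_add h.le_right h.sub_le_sub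

theorem add (h : IsSupermodularSquare a a' b b') (h' : IsSupermodularSquare c c' d d') :
    IsSupermodularSquare (a + c) (a' + c') (b + d) (b' + d') where
  nonneg := add_nonneg h.nonneg h'.nonneg
  le_left := add_le_add h.le_left h'.le_left
  le_right := add_le_add h.le_right h'.le_right
  sub_le_sub := by simpa only [add_sub_add_comm] using add_le_add h.sub_le_sub h'.sub_le_sub

theorem mul (h : IsSupermodularSquare a a' b b') (h' : IsSupermodularSquare c c' d d') :
    IsSupermodularSquare (a * c) (a' * c') (b * d) (b' * d') where
  nonneg := mul_nonneg h.nonneg h'.nonneg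
  le_left := mul_le_mul h.le_left h'.le_left h'.nonneg (h.nonneg.trans h.le_left)
  le_right := mul_le_mul h.le_right h'.le_right h'.nonneg (h.nonneg.trans h.le_right)
  sub_le_sub := by
    have h₁ : (b - b') * d ≤ (a - a') * c :=
      mul_le_mul h.sub_le_sub h'.le (h'.nonneg.trans h'.le_left)
        ((sub_nonneg.2 h.le_left).trans h.sub_le_sub)
    have h₂ : b' * (d - d') ≤ a' * (c - c') :=
      mul_le_mul h.le_right h'.sub_le_sub (sub_nonneg.2 h'.le_left) (h.nonneg.trans h.le_right)
    calc b * d - b' * d' = (b - b') * d + b' * (d - d') := by noncomm_ring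
      _ ≤ (a - a') * c + a' * (c - c') := add_le_add h₁ h₂
      _ = a * c - a' * c' := by noncomm_ring

theorem sum {ι : Type*} (s : Finset ι) {f f' g g' : ι → α}
    (h : ∀ i ∈ s, IsSupermodularSquare (f i) (f' i) (g i) (g' i)) :
    IsSupermodularSquare (∑ i ∈ s, f i) (∑ i ∈ s, f' i) (∑ i ∈ s, g i) (∑ i ∈ s, g' i) := by
  classical
  induction s using Finset.induction_on with
  | empty => simpa using const le_rfl
  | insert i s hi ih =>
    simp only [Finset.sum_insert hi]
    exact (h i (s.mem_insert_self i)).add (ih fun j hj => h j (Finset.mem_insert_of_mem hj))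

theorem matrix_mul [Fintype n]
    (h : ∀ i j, IsSupermodularSquare (A i j) (A' i j) (B i j) (B' i j))
    (h' : ∀ i j, IsSupermodularSquare (C i j) (C' i j) (D i j) (D' i j)) (i j : n) :
    IsSupermodularSquare ((A * C) i j) ((A' * C') i j) ((B * D) i j) ((B' * D') i j) := by
  simp only [Matrix.mul_apply]
  exact sum _ fun l _ => (h i l).mul (h' l j)

theorem matrix_pow [Fintype n] [DecidableEq n]
    (h : ∀ i j, IsSupermodularSquare (A i j) (A' i j) (B i j) (B' i j)) (k : ℕ) (i j : n) :
    IsSupermodularSquare ((A ^ k) i j) ((A' ^ k) i j) ((B ^ k) i j) ((B' ^ k) i j) := by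
  induction k generalizing i j with
  | zero =>
    simpa only [pow_zero, ← diagonal_one] using matrix_diagonal (fun _ => const zero_le_one) i j
  | succ k ih => simpa only [pow_succ] using matrix_mul ih h i j

theorem matrix_trace [Fintype n]
    (h : ∀ i j, IsSupermodularSquare (A i j) (A' i j) (B i j) (B' i j)) :
    IsSupermodularSquare A.trace A'.trace B.trace B'.trace :=
  sum _ fun i _ => h i i

theorem of_hasSum [TopologicalSpace α] [IsTopologicalAddGroup α] [OrderClosedTopology α]
    {f f' g g' : ℕ → α}
    (h : ∀ k, IsSupermodularSquare (f k) (f' k) (g k) (g' k)) (hf : HasSum f a)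
    (hf' : HasSum f' a') (hg : HasSum g b) (hg' : HasSum g' b') :
    IsSupermodularSquare a a' b b' where
  nonneg := hasSum_le (fun k => (h k).nonneg) hasSum_zero hg'
  le_left := hasSum_le (fun k => (h k).le_left) hg' hg
  le_right := hasSum_le (fun k => (h k).le_right) hg' hf'
  sub_le_sub := hasSum_le (fun k => (h k).sub_le_sub) (hg.sub hg') (hf.sub hf')

end IsSupermodularSquare

def diagCompl {V : Type*} [DecidableEq V] (S : Finset V) : Matrix V V ℝ :=
  diagonal fun i => if i ∉ S then 1 else 0

theorem IsSupermodularSquare.ite_notMem {V : Type*} [DecidableEq V] {S T : Finset V}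
    (hST : S ⊆ T) {v : V} (hv : v ∉ T) (i : V) :
    IsSupermodularSquare (if i ∉ S then (1 : ℝ) else 0) (if i ∉ insert v S then 1 else 0)
      (if i ∉ T then 1 else 0) (if i ∉ insert v T then 1 else 0) := by
  have hvS : v ∉ S := fun h => hv (hST h)
  by_cases hiv : i = v
  · subst hiv
    simpa [hv, hvS] using ⟨le_rfl, zero_le_one, le_rfl, le_rfl⟩
  · simp only [Finset.mem_insert, hiv, false_or]
    refine ⟨by split_ifs <;> simp, le_rfl, ?_, by simp only [sub_self, le_rfl]⟩
    split_ifs <;> simp_all [hST _]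

theorem IsSupermodularSquare.trace_pow_mul_diagCompl {V : Type*} [Fintype V] [DecidableEq V]
    {P : Matrix V V ℝ} (hP : ∀ i j, 0 ≤ P i j) {c : ℝ} (hc : 0 ≤ c) {S T : Finset V}
    (hST : S ⊆ T) {v : V} (hv : v ∉ T) (k : ℕ) :
    IsSupermodularSquare (c * ((P * diagCompl S) ^ k * diagCompl S).trace)
      (c * ((P * diagCompl (insert v S)) ^ k * diagCompl (insert v S)).trace)
      (c * ((P * diagCompl T) ^ k * diagCompl T).trace)
      (c * ((P * diagCompl (insert v T)) ^ k * diagCompl (insert v T)).trace) := by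
  have hD := matrix_diagonal (ite_notMem hST hv)
  exact (const hc).mul
    (matrix_trace (matrix_mul (matrix_pow (matrix_mul (fun i j => const (hP i j)) hD) k) hD))

namespace Matrix

section

variable {V : Type*} [DecidableEq V] (R : Type*) [CommRing R] (p : V → Prop)

def extendByZero : Matrix V {i // p i} R :=
  (1 : Matrix V V R).submatrix id Subtype.val

variable [Fintype V]

theorem transpose_extendByZero_mul_self : (extendByZero R p)ᵀ * extendByZero R p = 1 := by
  ext i j
  simp [extendByZero, mul_apply, one_apply, Subtype.ext_iff]

theorem submatrix_val_eq (M : Matrix V V R) :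
    M.submatrix (Subtype.val : {i // p i} → V) Subtype.val =
      (extendByZero R p)ᵀ * M * extendByZero R p := by
  ext i j
  simp [extendByZero, mul_apply, one_apply]

variable [DecidablePred p]

theorem extendByZero_mul_transpose_self :
    extendByZero R p * (extendByZero R p)ᵀ = diagonal fun i => if p i then 1 else 0 := by
  ext i j
  rw [mul_apply, diagonal_apply]
  by_cases h : p i ∧ i = j
  · obtain ⟨hi, rfl⟩ := h
    rw [Finset.sum_eq_single ⟨i, hi⟩] <;>
      simp +contextual [extendByZero, hi, one_apply, Subtype.ext_iff, eq_comm]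
  · rw [Finset.sum_eq_zero fun l _ => ?_]
    · grind
    simp only [extendByZero, transpose_apply, submatrix_apply, id, one_apply]
    grind

theorem dotProduct_submatrix_val_mulVec (M : Matrix V V R) (x : {i // p i} → R) :
    x ⬝ᵥ (M.submatrix Subtype.val Subtype.val *ᵥ x) =
      (extendByZero R p *ᵥ x) ⬝ᵥ (M *ᵥ (extendByZero R p *ᵥ x)) := by
  rw [submatrix_val_eq, ← mulVec_mulVec, ← mulVec_mulVec, dotProduct_mulVec, vecMul_transpose]

variable {R p} in
theorem extendByZero_mulVec_of_not {x : {i // p i} → R} {i : V} (hi : ¬p i) :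
    (extendByZero R p *ᵥ x) i = 0 := by
  refine Finset.sum_eq_zero fun l _ => ?_
  simp only [extendByZero, submatrix_apply, id, one_apply]
  grind

theorem trace_pow_submatrix_val (M : Matrix V V R) (k : ℕ) :
    ((M.submatrix (Subtype.val : {i // p i} → V) Subtype.val) ^ k).trace =
      ((M * diagonal fun i => if p i then 1 else 0) ^ k *
        diagonal fun i => if p i then 1 else 0).trace := by
  have hpow : (M.submatrix (Subtype.val : {i // p i} → V) Subtype.val) ^ k =
      (extendByZero R p)ᵀ * (M * diagonal fun i => if p i then 1 else 0) ^ k *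
        extendByZero R p := by
    induction k with
    | zero => rw [pow_zero, pow_zero, Matrix.mul_one, transpose_extendByZero_mul_self]
    | succ k ih =>
      rw [pow_succ', ih, submatrix_val_eq, pow_succ', ← extendByZero_mul_transpose_self]
      simp only [Matrix.mul_assoc]
  rw [hpow, Matrix.mul_assoc, trace_mul_comm, Matrix.mul_assoc, extendByZero_mul_transpose_self]

end

section

variable {n : Type*} [Fintype n] [DecidableEq n]

theorem trace_conjStarAlgAut {𝕜 : Type*} [RCLike 𝕜] (U : unitaryGroup n 𝕜) (M : Matrix n n 𝕜) :
    (Unitary.conjStarAlgAut 𝕜 _ U M).trace = M.trace := by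
  rw [Unitary.conjStarAlgAut_apply, trace_mul_cycle, Unitary.coe_star_mul_self, one_mul]

/-- `c * trace A ≤ 1` puts the spectrum of `1 - c A` in `[0, 1)`. -/
theorem PosDef.hasSum_trace_pow_one_sub_smul {A : Matrix n n ℝ} (hA : A.PosDef) {c : ℝ}
    (hc : 0 < c) (hcA : c * A.trace ≤ 1) :
    HasSum (fun k : ℕ => c * ((1 - c • A) ^ k).trace) A⁻¹.trace := by
  set φ := Unitary.conjStarAlgAut ℝ _ hA.1.eigenvectorUnitary
  set μ := hA.1.eigenvalues
  have hAφ : A = φ (diagonal μ) := by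
    have h := hA.1.spectral_theorem
    rwa [RCLike.ofReal_real_eq_id, Function.id_comp] at h
  have hpow (k : ℕ) : (1 - c • A) ^ k = φ (diagonal fun i => (1 - c * μ i) ^ k) := by
    have hd : 1 - c • diagonal μ = diagonal fun i => 1 - c * μ i := by
      ext i j
      by_cases hij : i = j <;> simp [hij]
    rw [hAφ, ← map_smul, ← map_one φ, ← map_sub, ← map_pow, hd, diagonal_pow]
    rfl
  have hinv : A⁻¹ = φ (diagonal fun i => (μ i)⁻¹) := by
    refine inv_eq_left_inv ?_
    rw [hAφ, ← map_mul, diagonal_mul_diagonal, ← map_one φ, ← diagonal_one]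
    congr 2
    ext i
    exact inv_mul_cancel₀ (hA.eigenvalues_pos i).ne'
  have hle (i : n) : c * μ i ≤ 1 := by
    refine le_trans (mul_le_mul_of_nonneg_left ?_ hc.le) hcA
    rw [hA.1.trace_eq_sum_eigenvalues]
    exact Finset.single_le_sum (fun j _ => (hA.eigenvalues_pos j).le) (Finset.mem_univ i)
  simp_rw [hpow, hinv, φ, trace_conjStarAlgAut, trace_diagonal, Finset.mul_sum]
  refine hasSum_sum fun i _ => ?_
  have hpos : 0 < c * μ i := mul_pos hc (hA.eigenvalues_pos i)
  rw [show (μ i)⁻¹ = c * (1 - (1 - c * μ i))⁻¹ by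
    rw [sub_sub_cancel, mul_inv, mul_inv_cancel_left₀ hc.ne']]
  exact (hasSum_geometric_of_lt_one (by linarith [hle i]) (by linarith)).mul_left c

end

end Matrix

namespace SimpleGraph

variable {V : Type*} [Fintype V] [DecidableEq V] (G : SimpleGraph V) [DecidableRel G.Adj]

theorem lapMatrix_apply_self_nonneg (i : V) : 0 ≤ G.lapMatrix ℝ i i := by
  simp [lapMatrix, degMatrix]

theorem lapMatrix_apply_nonpos_of_ne {i j : V} (hij : i ≠ j) : G.lapMatrix ℝ i j ≤ 0 := by
  by_cases h : G.Adj i j <;> simp [lapMatrix, degMatrix, hij, h]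

theorem one_sub_smul_lapMatrix_nonneg {c : ℝ} (hc : 0 ≤ c)
    (hcL : c * (G.lapMatrix ℝ).trace ≤ 1) (i j : V) : 0 ≤ (1 - c • G.lapMatrix ℝ) i j := by
  by_cases hij : i = j
  · subst hij
    have hdiag : G.lapMatrix ℝ i i ≤ (G.lapMatrix ℝ).trace :=
      Finset.single_le_sum (fun j _ => G.lapMatrix_apply_self_nonneg j) (Finset.mem_univ i)
    simp only [Matrix.sub_apply, one_apply_eq, Matrix.smul_apply, smul_eq_mul, sub_nonneg]
    exact (mul_le_mul_of_nonneg_left hdiag hc).trans hcL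
  · simp only [Matrix.sub_apply, one_apply_ne hij, Matrix.smul_apply, smul_eq_mul, zero_sub,
      neg_nonneg]
    exact mul_nonpos_of_nonneg_of_nonpos hc (G.lapMatrix_apply_nonpos_of_ne hij)

theorem trace_Lff_le (S : Finset V) : (Lff G S).trace ≤ (G.lapMatrix ℝ).trace := by
  change ∑ i : {i // i ∉ S}, G.lapMatrix ℝ i i ≤ ∑ i, G.lapMatrix ℝ i i
  exact (Finset.sum_subtype Sᶜ (fun _ => Finset.mem_compl) _).symm.le.trans
    (Finset.sum_le_univ_sum_of_nonneg G.lapMatrix_apply_self_nonneg)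

theorem posDef_Lff (hG : G.Connected) {S : Finset V} (hS : S.Nonempty) : (Lff G S).PosDef := by
  have hpsd : (Lff G S).PosSemidef := (G.posSemidef_lapMatrix ℝ).submatrix _
  refine posDef_iff_dotProduct_mulVec.2
    ⟨hpsd.1, fun x hx => (hpsd.dotProduct_mulVec_nonneg x).lt_of_ne' ?_⟩
  set y := extendByZero ℝ (· ∉ S) *ᵥ x
  rw [star_trivial, Lff, dotProduct_submatrix_val_mulVec, ← toLinearMap₂'_apply']
  intro hy
  have hconst := (G.lapMatrix_toLinearMap₂'_apply'_eq_zero_iff_forall_reachable y).1 hy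
  obtain ⟨s, hs⟩ := hS
  have hy0 : y = 0 := funext fun i =>
    (hconst i s (hG.preconnected i s)).trans (extendByZero_mulVec_of_not (not_not.2 hs))
  apply hx
  calc x = ((extendByZero ℝ (· ∉ S))ᵀ * extendByZero ℝ (· ∉ S)) *ᵥ x := by
        rw [transpose_extendByZero_mul_self, one_mulVec]
    _ = (extendByZero ℝ (· ∉ S))ᵀ *ᵥ y := (mulVec_mulVec _ _ _).symm
    _ = 0 := by rw [hy0, mulVec_zero]

theorem hasSum_noiseMetric (hG : G.Connected) {S : Finset V} (hS : S.Nonempty) {c : ℝ}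
    (hc : 0 < c) (hcL : c * (G.lapMatrix ℝ).trace ≤ 1) :
    HasSum (fun k : ℕ => c * (((1 - c • G.lapMatrix ℝ) * diagCompl S) ^ k * diagCompl S).trace)
      (noiseMetric G S) := by
  have h := (G.posDef_Lff hG hS).hasSum_trace_pow_one_sub_smul hc
    ((mul_le_mul_of_nonneg_left (G.trace_Lff_le S) hc.le).trans hcL)
  have hsub : 1 - c • Lff G S = (1 - c • G.lapMatrix ℝ).submatrix Subtype.val Subtype.val := by
    ext i j
    simp [Lff, one_apply, Subtype.ext_iff]
  simpa only [hsub, trace_pow_submatrix_val, noiseMetric, diagCompl] using h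

end SimpleGraph

/-- For a connected simple undirected graph `G`, the noise-robustness metric
`R(S) = trace(L_ff(S)⁻¹)` is monotone nonincreasing and supermodular on nonempty
subsets of the vertex set. -/
theorem noiseMetric_supermodular {V : Type*} [Fintype V] [DecidableEq V]
    (G : SimpleGraph V) [DecidableRel G.Adj] (hG : G.Connected) :
    ∀ S T : Finset V, S.Nonempty → S ⊆ T → ∀ v ∉ T,
      (noiseMetric G S - noiseMetric G (insert v S) ≥
        noiseMetric G T - noiseMetric G (insert v T)) ∧
      noiseMetric G S ≥ noiseMetric G T := by
  intro S T hS hST v hvT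
  set c := ((G.lapMatrix ℝ).trace + 1)⁻¹
  have htrace : 0 ≤ (G.lapMatrix ℝ).trace :=
    Finset.sum_nonneg fun i _ => G.lapMatrix_apply_self_nonneg i
  have hc : 0 < c := by positivity
  have hcL : c * (G.lapMatrix ℝ).trace ≤ 1 := by
    rw [inv_mul_le_iff₀ (by positivity)]
    linarith
  have hsq := IsSupermodularSquare.of_hasSum
    (IsSupermodularSquare.trace_pow_mul_diagCompl
      (G.one_sub_smul_lapMatrix_nonneg hc.le hcL) hc.le hST hvT)
    (G.hasSum_noiseMetric hG hS hc hcL)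
    (G.hasSum_noiseMetric hG (Finset.insert_nonempty v S) hc hcL)
    (G.hasSum_noiseMetric hG (hS.mono hST) hc hcL)
    (G.hasSum_noiseMetric hG (Finset.insert_nonempty v T) hc hcL)
  exact ⟨hsq.sub_le_sub, hsq.le⟩
end

section
/- Let Σ₀ ∈ ℝ^{n×n} be a symmetric positive definite matrix, σ > 0, and c₁, …, c_m ∈ ℝⁿ. For S ⊆ {1,…,m}, define the posterior covariance Σ(S) = (Σ₀^{-1} + σ^{-2} Σ_{i∈S} c_i c_iᵀ)^{-1}, which is positive definite. Then the function h(S) = log det Σ(S) is monotone nonincreasing and supermodular: for all S ⊆ T ⊆ {1,…,m} and v ∉ T, h(S) - h(S ∪ {v}) ≥ h(T) - h(T ∪ {v}), and h(S) ≥ h(T). -/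
open Matrix

/-! The posterior covariance is the inverse of the information matrix
`P(S) = Σ₀⁻¹ + σ⁻² ∑_{i ∈ S} cᵢ cᵢᵀ`, so `h S = -log det P(S)`. Adding a sensor `v` is a rank-one
update of `P(S)`, and the matrix determinant lemma turns the marginal gain into
`h S - h (S ∪ {v}) = log (1 + σ⁻² cᵥᵀ P(S)⁻¹ cᵥ)`. This gain is nonnegative, which gives
monotonicity. It shrinks as `S` grows because `P(S) ≤ P(T)` in the Loewner order and
`A ↦ xᵀ A⁻¹ x` is antitone on positive definite matrices, by the variational formula
`xᵀ A⁻¹ x = max_y (2 yᵀx - yᵀ A y)`; this gives supermodularity. -/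

namespace Matrix

variable {ι : Type*} [Fintype ι]

theorem det_add_vecMulVec [DecidableEq ι] {R : Type*} [CommRing R] {A : Matrix ι ι R}
    (hA : IsUnit A.det) (u v : ι → R) :
    (A + vecMulVec u v).det = A.det * (1 + v ⬝ᵥ A⁻¹ *ᵥ u) := by
  rw [vecMulVec_eq Unit, det_add_replicateCol_mul_replicateRow hA,
    det_unique (1 + _ : Matrix Unit Unit R), Matrix.add_apply, one_apply_eq,
    ← replicateRow_vecMul, replicateRow_mul_replicateCol_apply, ← dotProduct_mulVec]

theorem IsHermitian.dotProduct_mulVec_comm {A : Matrix ι ι ℝ} (hA : A.IsHermitian)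
    (x y : ι → ℝ) : x ⬝ᵥ A *ᵥ y = y ⬝ᵥ A *ᵥ x := by
  rw [dotProduct_mulVec, ← mulVec_transpose, ← conjTranspose_eq_transpose_of_trivial, hA.eq,
    dotProduct_comm]

namespace PosDef

variable [DecidableEq ι] {A B : Matrix ι ι ℝ}

theorem mulVec_inv_mulVec (hA : A.PosDef) (x : ι → ℝ) : A *ᵥ (A⁻¹ *ᵥ x) = x := by
  rw [mulVec_mulVec, mul_nonsing_inv A ((isUnit_iff_isUnit_det A).mp hA.isUnit), one_mulVec]

-- Completing the square: `0 ≤ (y - A⁻¹x)ᵀ A (y - A⁻¹x)`.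
theorem two_mul_dotProduct_sub_le (hA : A.PosDef) (x y : ι → ℝ) :
    2 * (y ⬝ᵥ x) - y ⬝ᵥ A *ᵥ y ≤ x ⬝ᵥ A⁻¹ *ᵥ x := by
  have hsq := hA.posSemidef.dotProduct_mulVec_nonneg (y - A⁻¹ *ᵥ x)
  rw [star_trivial, mulVec_sub, hA.mulVec_inv_mulVec, sub_dotProduct, dotProduct_sub,
    dotProduct_sub, hA.isHermitian.dotProduct_mulVec_comm (A⁻¹ *ᵥ x), hA.mulVec_inv_mulVec,
    dotProduct_comm (A⁻¹ *ᵥ x)] at hsq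
  linarith

theorem dotProduct_inv_mulVec_le (hA : A.PosDef) (hB : B.PosDef) (hAB : (B - A).PosSemidef)
    (x : ι → ℝ) : x ⬝ᵥ B⁻¹ *ᵥ x ≤ x ⬝ᵥ A⁻¹ *ᵥ x := by
  have hgap := hAB.dotProduct_mulVec_nonneg (B⁻¹ *ᵥ x)
  rw [star_trivial, sub_mulVec, dotProduct_sub, hB.mulVec_inv_mulVec,
    dotProduct_comm (B⁻¹ *ᵥ x) x] at hgap
  have := hA.two_mul_dotProduct_sub_le x (B⁻¹ *ᵥ x)
  rw [dotProduct_comm (B⁻¹ *ᵥ x) x] at this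
  linarith

end PosDef

end Matrix

section InformationMatrix

variable {ι κ : Type*} {P₀ : Matrix ι ι ℝ} {t : ℝ} {S T : Finset κ} {v : κ}

variable (P₀ t) in
def infoMatrix (c : κ → ι → ℝ) (S : Finset κ) : Matrix ι ι ℝ :=
  P₀ + t • ∑ i ∈ S, vecMulVec (c i) (c i)

variable (P₀ t) in
noncomputable def infoGain [Fintype ι] [DecidableEq ι] (c : κ → ι → ℝ) (S : Finset κ) (v : κ) :
    ℝ :=
  Real.log (1 + t * (c v ⬝ᵥ (infoMatrix P₀ t c S)⁻¹ *ᵥ c v))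

theorem posSemidef_smul_sum_vecMulVec [Fintype ι] (ht : 0 ≤ t) (c : κ → ι → ℝ) (U : Finset κ) :
    (t • ∑ i ∈ U, vecMulVec (c i) (c i)).PosSemidef :=
  (posSemidef_sum U fun i _ => by simpa using posSemidef_vecMulVec_self_star (c i)).smul ht

theorem infoMatrix_insert [DecidableEq κ] (c : κ → ι → ℝ) (hv : v ∉ S) :
    infoMatrix P₀ t c (insert v S) = infoMatrix P₀ t c S + vecMulVec (t • c v) (c v) := by
  rw [infoMatrix, infoMatrix, Finset.sum_insert hv, smul_add, smul_vecMulVec]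
  abel

theorem infoMatrix_sub_posSemidef [Fintype ι] [DecidableEq κ] (ht : 0 ≤ t) (c : κ → ι → ℝ)
    (hST : S ⊆ T) : (infoMatrix P₀ t c T - infoMatrix P₀ t c S).PosSemidef := by
  have hsub : infoMatrix P₀ t c T - infoMatrix P₀ t c S
      = t • ∑ i ∈ T \ S, vecMulVec (c i) (c i) := by
    rw [infoMatrix, infoMatrix, ← Finset.sum_sdiff hST, smul_add]
    abel
  rw [hsub]
  exact posSemidef_smul_sum_vecMulVec ht c _

theorem posDef_infoMatrix [Fintype ι] (hP₀ : P₀.PosDef) (ht : 0 ≤ t) (c : κ → ι → ℝ)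
    (S : Finset κ) : (infoMatrix P₀ t c S).PosDef :=
  hP₀.add_posSemidef (posSemidef_smul_sum_vecMulVec ht c S)

theorem one_le_one_add_mul_dotProduct_inv_mulVec_infoMatrix [Fintype ι] [DecidableEq ι]
    (hP₀ : P₀.PosDef) (ht : 0 ≤ t) (c : κ → ι → ℝ) (S : Finset κ) (v : κ) :
    1 ≤ 1 + t * (c v ⬝ᵥ (infoMatrix P₀ t c S)⁻¹ *ᵥ c v) := by
  have hq := (posDef_infoMatrix hP₀ ht c S).inv.posSemidef.dotProduct_mulVec_nonneg (c v)
  rw [star_trivial] at hq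
  nlinarith

theorem infoGain_nonneg [Fintype ι] [DecidableEq ι] (hP₀ : P₀.PosDef) (ht : 0 ≤ t)
    (c : κ → ι → ℝ) (S : Finset κ) (v : κ) : 0 ≤ infoGain P₀ t c S v :=
  Real.log_nonneg (one_le_one_add_mul_dotProduct_inv_mulVec_infoMatrix hP₀ ht c S v)

theorem infoGain_anti [Fintype ι] [DecidableEq ι] [DecidableEq κ] (hP₀ : P₀.PosDef)
    (ht : 0 ≤ t) (c : κ → ι → ℝ) (hST : S ⊆ T) (v : κ) :
    infoGain P₀ t c T v ≤ infoGain P₀ t c S v := by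
  refine Real.log_le_log
    (by linarith [one_le_one_add_mul_dotProduct_inv_mulVec_infoMatrix hP₀ ht c T v]) ?_
  gcongr
  exact (posDef_infoMatrix hP₀ ht c S).dotProduct_inv_mulVec_le (posDef_infoMatrix hP₀ ht c T)
    (infoMatrix_sub_posSemidef ht c hST) (c v)

theorem log_det_infoMatrix_insert [Fintype ι] [DecidableEq ι] [DecidableEq κ]
    (hP₀ : P₀.PosDef) (ht : 0 ≤ t) (c : κ → ι → ℝ) (hv : v ∉ S) :
    Real.log (infoMatrix P₀ t c (insert v S)).det
      = Real.log (infoMatrix P₀ t c S).det + infoGain P₀ t c S v := by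
  have hA := posDef_infoMatrix hP₀ ht c S
  have hone := one_le_one_add_mul_dotProduct_inv_mulVec_infoMatrix hP₀ ht c S v
  rw [infoMatrix_insert c hv, det_add_vecMulVec ((isUnit_iff_isUnit_det _).mp hA.isUnit),
    mulVec_smul, dotProduct_smul, smul_eq_mul, Real.log_mul hA.det_pos.ne' (by linarith),
    infoGain]

end InformationMatrix

theorem logdet_posterior_supermodular_general {n m : ℕ}
    (Sig0 : Matrix (Fin n) (Fin n) ℝ) (hSig0 : Sig0.PosDef)
    (sig : ℝ)
    (c : Fin m → (Fin n → ℝ))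
    (h : Finset (Fin m) → ℝ)
    (hh : ∀ S : Finset (Fin m), h S =
      Real.log (Matrix.det ((Sig0⁻¹ +
        sig⁻¹ ^ 2 • ∑ i ∈ S, Matrix.vecMulVec (c i) (c i))⁻¹))) :
    ∀ S T : Finset (Fin m), S ⊆ T → ∀ v ∉ T,
      (h S - h (insert v S) ≥ h T - h (insert v T)) ∧ h S ≥ h T := by
  have ht : 0 ≤ sig⁻¹ ^ 2 := by positivity
  have hlog : ∀ S, h S = -Real.log (infoMatrix Sig0⁻¹ (sig⁻¹ ^ 2) c S).det := fun S => by
    rw [hh, det_nonsing_inv, Ring.inverse_eq_inv', Real.log_inv, infoMatrix]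
  have hgain : ∀ S v, v ∉ S → h S - h (insert v S) = infoGain Sig0⁻¹ (sig⁻¹ ^ 2) c S v := by
    intro S v hv
    rw [hlog, hlog, log_det_infoMatrix_insert hSig0.inv ht c hv]
    ring
  have hanti : Antitone h := Finset.antitone_iff_forall_insert_le.mpr fun S v hv => by
    linarith [hgain S v hv, infoGain_nonneg hSig0.inv ht c S v]
  intro S T hST v hvT
  refine ⟨?_, hanti hST⟩
  rw [hgain S v (fun hvS => hvT (hST hvS)), hgain T v hvT]
  exact infoGain_anti hSig0.inv ht c hST v

/-- For a symmetric positive definite prior covariance `Sig0`, noise level `sig > 0`, and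
measurement vectors `c₁,…,c_m`, the log-determinant of the posterior covariance
`Sig(S) = (Sig0⁻¹ + sig⁻² ∑_{i∈S} cᵢcᵢᵀ)⁻¹` is monotone nonincreasing and supermodular in
the selected sensor set `S`. -/
theorem logdet_posterior_supermodular {n m : ℕ}
    (Sig0 : Matrix (Fin n) (Fin n) ℝ) (hSig0 : Sig0.PosDef)
    (sig : ℝ) (hsig : 0 < sig)
    (c : Fin m → (Fin n → ℝ))
    (h : Finset (Fin m) → ℝ)
    (hh : ∀ S : Finset (Fin m), h S =
      Real.log (Matrix.det ((Sig0⁻¹ +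
        sig⁻¹ ^ 2 • ∑ i ∈ S, Matrix.vecMulVec (c i) (c i))⁻¹))) :
    ∀ S T : Finset (Fin m), S ⊆ T → ∀ v ∉ T,
      (h S - h (insert v S) ≥ h T - h (insert v T)) ∧ h S ≥ h T :=
  logdet_posterior_supermodular_general Sig0 hSig0 sig c h hh
end

section
/- Let V be a finite set and P ∈ ℝ^{V×V} a row-stochastic matrix (nonnegative entries, each row summing to 1). For S ⊆ V, define the absorbed matrix P_S by (P_S)_{ij} = P_{ij} if i ∉ S and (P_S)_{ij} = δ_{ij} if i ∈ S. Then for every τ ∈ ℕ, every i ∈ V, every S ⊆ T ⊆ V, every v ∈ V \ T, and every j ∈ V \ (T ∪ {v}), (P_S^τ)_{ij} - (P_{S∪{v}}^τ)_{ij} ≥ (P_T^τ)_{ij} - (P_{T∪{v}}^τ)_{ij}; that is, the absorption probability g_{ij}(S) = (P_S^τ)_{ij} of the walk being at j at time τ is a supermodular function of the absorbing set S. -/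
open Matrix

/-- The modification of a transition matrix `P` in which every state in `S` is made
absorbing: rows indexed by `S` are replaced by the corresponding rows of the identity. -/
def absorb {V : Type*} [DecidableEq V] (P : Matrix V V ℝ) (S : Finset V) :
    Matrix V V ℝ :=
  Matrix.of fun i j => if i ∈ S then (if i = j then 1 else 0) else P i j

/-! First-step analysis: from `i ∉ S` the absorbed walk takes one step of `P`, from `i ∈ S` it
stays put. With `Δ_S = P_S^τ - P_{S ∪ {v}}^τ`, the first step makes `Δ_S(i, j)` a `P`-average of
`Δ_S(·, j)` at time `τ - 1` when `i ∉ S ∪ {v}`, equal to `P_S^τ(i, j)` when `i = v`, and `0` when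
`i ∈ S`. Induction on `τ` then gives `Δ_T ≤ Δ_S`, the case `i = v` (and `i ∈ T \ S`) reducing to
the fact that `P_S^τ(·, j)` decreases as `S` grows, for `j` outside the larger set. -/

namespace Matrix

variable {V : Type*} [Fintype V] [DecidableEq V] (P : Matrix V V ℝ)

theorem absorb_pow_apply_of_mem {S : Finset V} {i : V} (hi : i ∈ S) (τ : ℕ) (j : V) :
    (absorb P S ^ τ) i j = if i = j then 1 else 0 := by
  induction τ with
  | zero => simp [one_apply]
  | succ n ih =>
    have hrow : ∀ k, absorb P S i k = if i = k then 1 else 0 := fun k => by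
      simp [absorb, hi]
    simp [pow_succ', mul_apply, hrow, ih]

theorem absorb_pow_apply_eq_zero {S : Finset V} {i j : V} (hi : i ∈ S) (hj : j ∉ S)
    (τ : ℕ) : (absorb P S ^ τ) i j = 0 := by
  rw [absorb_pow_apply_of_mem P hi, if_neg (by rintro rfl; exact hj hi)]

theorem absorb_pow_succ_apply_of_notMem {S : Finset V} {i : V} (hi : i ∉ S) (τ : ℕ)
    (j : V) : (absorb P S ^ (τ + 1)) i j = ∑ k, P i k * (absorb P S ^ τ) k j := by
  rw [pow_succ', mul_apply]
  exact Finset.sum_congr rfl fun k _ => by simp [absorb, hi]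

theorem absorb_pow_succ_apply_sub {S T : Finset V} {i : V} (hiS : i ∉ S) (hiT : i ∉ T)
    (τ : ℕ) (j : V) :
    (absorb P S ^ (τ + 1)) i j - (absorb P T ^ (τ + 1)) i j =
      ∑ k, P i k * ((absorb P S ^ τ) k j - (absorb P T ^ τ) k j) := by
  simp only [absorb_pow_succ_apply_of_notMem P hiS, absorb_pow_succ_apply_of_notMem P hiT,
    mul_sub, Finset.sum_sub_distrib]

variable {P}

theorem absorb_pow_nonneg (hP : ∀ i j, 0 ≤ P i j) (S : Finset V) (τ : ℕ) (i j : V) :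
    0 ≤ (absorb P S ^ τ) i j := by
  induction τ generalizing i with
  | zero => simp only [pow_zero, one_apply]; positivity
  | succ n ih =>
    by_cases hi : i ∈ S
    · rw [absorb_pow_apply_of_mem P hi]; positivity
    · rw [absorb_pow_succ_apply_of_notMem P hi]
      exact Finset.sum_nonneg fun k _ => mul_nonneg (hP i k) (ih k)

theorem absorb_pow_apply_anti (hP : ∀ i j, 0 ≤ P i j) {S T : Finset V} (hST : S ⊆ T)
    {j : V} (hj : j ∉ T) (τ : ℕ) (i : V) :
    (absorb P T ^ τ) i j ≤ (absorb P S ^ τ) i j := by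
  induction τ generalizing i with
  | zero => rfl
  | succ n ih =>
    by_cases hiS : i ∈ S
    · rw [absorb_pow_apply_of_mem P hiS, absorb_pow_apply_of_mem P (hST hiS)]
    by_cases hiT : i ∈ T
    · rw [absorb_pow_apply_eq_zero P hiT hj]
      exact absorb_pow_nonneg hP S _ i j
    · rw [← sub_nonneg, absorb_pow_succ_apply_sub P hiS hiT]
      exact Finset.sum_nonneg fun k _ => mul_nonneg (hP i k) (sub_nonneg.mpr (ih k))

theorem absorb_pow_apply_sub_insert_anti (hP : ∀ i j, 0 ≤ P i j) {S T : Finset V}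
    (hST : S ⊆ T) {v : V} (hv : v ∉ T) {j : V} (hjT : j ∉ T) (hjv : j ≠ v) (τ : ℕ) (i : V) :
    (absorb P T ^ τ) i j - (absorb P (insert v T) ^ τ) i j ≤
      (absorb P S ^ τ) i j - (absorb P (insert v S) ^ τ) i j := by
  have hjS : j ∉ S := fun h => hjT (hST h)
  have hjvS : j ∉ insert v S := by simp [hjS, hjv]
  have hjvT : j ∉ insert v T := by simp [hjT, hjv]
  induction τ generalizing i with
  | zero => simp
  | succ n ih =>
    by_cases hiS : i ∈ S
    · simp only [absorb_pow_apply_eq_zero P hiS hjS, absorb_pow_apply_eq_zero P (hST hiS) hjT,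
        absorb_pow_apply_eq_zero P (Finset.mem_insert_of_mem hiS) hjvS,
        absorb_pow_apply_eq_zero P (Finset.mem_insert_of_mem (hST hiS)) hjvT, le_refl]
    by_cases hiv : i = v
    · subst hiv
      rw [absorb_pow_apply_eq_zero P (Finset.mem_insert_self i S) hjvS,
        absorb_pow_apply_eq_zero P (Finset.mem_insert_self i T) hjvT, sub_zero, sub_zero]
      exact absorb_pow_apply_anti hP hST hjT _ i
    have hivS : i ∉ insert v S := by simp [hiS, hiv]
    by_cases hiT : i ∈ T
    · rw [absorb_pow_apply_eq_zero P hiT hjT,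
        absorb_pow_apply_eq_zero P (Finset.mem_insert_of_mem hiT) hjvT, sub_zero, sub_nonneg]
      exact absorb_pow_apply_anti hP (Finset.subset_insert v S) hjvS _ i
    · have hivT : i ∉ insert v T := by simp [hiT, hiv]
      rw [absorb_pow_succ_apply_sub P hiS hivS, absorb_pow_succ_apply_sub P hiT hivT]
      exact Finset.sum_le_sum fun k _ => mul_le_mul_of_nonneg_left (ih k) (hP i k)

end Matrix

theorem absorption_probability_supermodular_general {V : Type*} [Fintype V] [DecidableEq V]
    (P : Matrix V V ℝ)
    (hnonneg : ∀ i j, 0 ≤ P i j) :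
    ∀ (τ : ℕ) (i : V) (S T : Finset V), S ⊆ T → ∀ v ∉ T, ∀ j : V, j ∉ T → j ≠ v →
      ((absorb P S) ^ τ) i j - ((absorb P (insert v S)) ^ τ) i j ≥
        ((absorb P T) ^ τ) i j - ((absorb P (insert v T)) ^ τ) i j :=
  fun τ i _ _ hST _ hv _ hjT hjv =>
    absorb_pow_apply_sub_insert_anti hnonneg hST hv hjT hjv τ i

/-- For a row-stochastic matrix `P`, the probability `g_{ij}(S) = (P_S^τ)_{ij}` that the
walk absorbed on `S`, started at `i`, is at `j ∉ T ∪ {v}` at time `τ`, is a supermodular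
function of the absorbing set `S`. -/
theorem absorption_probability_supermodular {V : Type*} [Fintype V] [DecidableEq V]
    (P : Matrix V V ℝ)
    (hnonneg : ∀ i j, 0 ≤ P i j)
    (hrowsum : ∀ i, ∑ j, P i j = 1) :
    ∀ (τ : ℕ) (i : V) (S T : Finset V), S ⊆ T → ∀ v ∉ T, ∀ j : V, j ∉ T → j ≠ v →
      ((absorb P S) ^ τ) i j - ((absorb P (insert v S)) ^ τ) i j ≥
        ((absorb P T) ^ τ) i j - ((absorb P (insert v T)) ^ τ) i j :=
  absorption_probability_supermodular_general P hnonneg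
end

section
/- Let V be a finite set, P ∈ ℝ^{V×V} a row-stochastic matrix, τ ∈ ℕ, and p ≥ 1 a real number. For S ⊆ V let P_S be the matrix with (P_S)_{ij} = P_{ij} for i ∉ S and (P_S)_{ij} = δ_{ij} for i ∈ S, and define g_{ij}(S) = (P_S^τ)_{ij} and h_i(S) = Σ_{j∈V\S} (P_S^τ)_{ij}. Then the convergence error bound f̂(S) = Σ_{i∈V\S} [ Σ_{j∈V\S} g_{ij}(S)^p + h_i(S)^p ] is a supermodular function of S: for all S ⊆ T ⊆ V and v ∈ V \ T, f̂(S) - f̂(S ∪ {v}) ≥ f̂(T) - f̂(T ∪ {v}). -/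
open Matrix

/-!
Write `D_S` for the diagonal projection onto the coordinates outside `S`. Since
`P_S D_S = D_S P D_S`, the block of `P_S^τ` on `V \ S` is that of `(D_S P D_S)^τ`, so `f̂(S)` is
a sum of terms `φ (g S)` and `φ (∑ g S)` with `φ x = x ^ p`, where the `g S` are the entries of
`(D_S P D_S)^τ D_S`. The entries of `D_S` and of `P` are nonnegative, antitone and supermodular
functions of `S`, and this class is closed under sums, under products (by the product rule for
marginals) and under composition with a nonnegative, increasing, convex `φ` (the increments of a
convex function grow with the base point). Hence `f̂` is supermodular.
-/

open Finset

theorem ConvexOn.map_add_sub_map_le_map_add_sub_map {s : Set ℝ} {φ : ℝ → ℝ}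
    (hφ : ConvexOn ℝ s φ) {a b h : ℝ} (ha : a ∈ s) (hb : b + h ∈ s) (hab : a ≤ b)
    (hh : 0 ≤ h) : φ (a + h) - φ a ≤ φ (b + h) - φ b := by
  rcases (show 0 ≤ b - a + h by linarith).eq_or_lt with hd | hd
  · obtain rfl : a = b := by linarith
    obtain rfl : h = 0 := by linarith
    simp
  -- `a + h` and `b` are the two convex combinations of `a` and `b + h` with swapped weights.
  set t := h / (b - a + h)
  have ht : 0 ≤ t := div_nonneg hh hd.le
  have ht' : 0 ≤ 1 - t := by rw [sub_nonneg, div_le_one hd]; linarith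
  have hleft := hφ.2 ha hb ht' ht (by ring)
  have hright := hφ.2 ha hb ht ht' (by ring)
  have e₁ : (1 - t) • a + t • (b + h) = a + h := by
    simp only [smul_eq_mul, t]; field_simp; ring
  have e₂ : t • a + (1 - t) • (b + h) = b := by
    simp only [smul_eq_mul, t]; field_simp; ring
  rw [e₁] at hleft
  rw [e₂] at hright
  simp only [smul_eq_mul] at hleft hright
  linarith

theorem ConvexOn.map_sub_map_le_of_sub_le {φ : ℝ → ℝ} (hφ : ConvexOn ℝ (Set.Ici 0) φ)
    (hmono : MonotoneOn φ (Set.Ici 0)) {a b c d : ℝ} (ha : 0 ≤ a) (hab : a ≤ b) (hac : a ≤ c)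
    (h : c - a ≤ d - b) : φ c - φ a ≤ φ d - φ b := by
  have hc : φ c ≤ φ (a + (d - b)) :=
    hmono (show (0 : ℝ) ≤ c by linarith) (show (0 : ℝ) ≤ a + (d - b) by linarith)
      (by linarith)
  have hincr := hφ.map_add_sub_map_le_map_add_sub_map (h := d - b) (Set.mem_Ici.2 ha)
    (show (0 : ℝ) ≤ b + (d - b) by linarith) hab (by linarith)
  rw [add_sub_cancel] at hincr
  linarith

section SetFunction

variable {α : Type*} [DecidableEq α]

def Supermodular (F : Finset α → ℝ) : Prop :=
  ∀ ⦃S T : Finset α⦄, S ⊆ T → ∀ v ∉ T, F (insert v S) - F S ≤ F (insert v T) - F T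

structure IsNonnegAntitoneSupermodular (F : Finset α → ℝ) : Prop where
  nonneg : ∀ S, 0 ≤ F S
  antitone : Antitone F
  supermodular : Supermodular F

namespace IsNonnegAntitoneSupermodular

variable {F G : Finset α → ℝ}

theorem const {c : ℝ} (hc : 0 ≤ c) : IsNonnegAntitoneSupermodular fun _ : Finset α => c :=
  ⟨fun _ => hc, antitone_const, fun _ _ _ _ _ => le_rfl⟩

theorem ite_mem (a : α) :
    IsNonnegAntitoneSupermodular fun S : Finset α => if a ∈ S then (0 : ℝ) else 1 where
  nonneg S := by split_ifs <;> norm_num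
  antitone S T hST := by
    by_cases haT : a ∈ T
    · simp only [haT, if_true]; split_ifs <;> norm_num
    · have haS : a ∉ S := fun h => haT (hST h)
      simp [haS, haT]
  supermodular S T hST v hvT := by
    by_cases haT : a ∈ T
    · have hav : a ≠ v := fun h => hvT (h ▸ haT)
      by_cases haS : a ∈ S <;> simp [haS, haT, hav]
    · have haS : a ∉ S := fun h => haT (hST h)
      simp [haS, haT]

theorem sum {ι : Type*} {s : Finset ι} {F : ι → Finset α → ℝ}
    (hF : ∀ k ∈ s, IsNonnegAntitoneSupermodular (F k)) :
    IsNonnegAntitoneSupermodular fun S => ∑ k ∈ s, F k S where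
  nonneg S := sum_nonneg fun k hk => (hF k hk).nonneg S
  antitone S T hST := sum_le_sum fun k hk => (hF k hk).antitone hST
  supermodular S T hST v hvT := by
    simp only [← sum_sub_distrib]
    exact sum_le_sum fun k hk => (hF k hk).supermodular hST v hvT

theorem add (hF : IsNonnegAntitoneSupermodular F) (hG : IsNonnegAntitoneSupermodular G) :
    IsNonnegAntitoneSupermodular fun S => F S + G S where
  nonneg S := add_nonneg (hF.nonneg S) (hG.nonneg S)
  antitone S T hST := add_le_add (hF.antitone hST) (hG.antitone hST)
  supermodular S T hST v hvT := by
    linarith [hF.supermodular hST v hvT, hG.supermodular hST v hvT]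

theorem mul (hF : IsNonnegAntitoneSupermodular F) (hG : IsNonnegAntitoneSupermodular G) :
    IsNonnegAntitoneSupermodular fun S => F S * G S where
  nonneg S := mul_nonneg (hF.nonneg S) (hG.nonneg S)
  antitone S T hST := mul_le_mul (hF.antitone hST) (hG.antitone hST) (hG.nonneg T) (hF.nonneg S)
  supermodular S T hST v hvT := by
    -- With `S' = insert v S`: `F S G S - F S' G S' = (F S - F S') G S + F S' (G S - G S')`.
    have hFd : F T - F (insert v T) ≤ F S - F (insert v S) := by
      linarith [hF.supermodular hST v hvT]
    have hGd : G T - G (insert v T) ≤ G S - G (insert v S) := by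
      linarith [hG.supermodular hST v hvT]
    have h₁ : (F T - F (insert v T)) * G T ≤ (F S - F (insert v S)) * G S :=
      mul_le_mul hFd (hG.antitone hST) (hG.nonneg T)
        (sub_nonneg.2 (hF.antitone (subset_insert v S)))
    have h₂ : F (insert v T) * (G T - G (insert v T)) ≤ F (insert v S) * (G S - G (insert v S)) :=
      mul_le_mul (hF.antitone (insert_subset_insert v hST)) hGd
        (sub_nonneg.2 (hG.antitone (subset_insert v T))) (hF.nonneg _)
    linarith

theorem comp {φ : ℝ → ℝ} (hF : IsNonnegAntitoneSupermodular F) (hφ : ConvexOn ℝ (Set.Ici 0) φ)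
    (hmono : MonotoneOn φ (Set.Ici 0)) (hnonneg : ∀ x, 0 ≤ x → 0 ≤ φ x) :
    IsNonnegAntitoneSupermodular fun S => φ (F S) where
  nonneg S := hnonneg _ (hF.nonneg S)
  antitone S T hST := hmono (hF.nonneg T) (hF.nonneg S) (hF.antitone hST)
  supermodular S T hST v hvT := by
    have := hφ.map_sub_map_le_of_sub_le (d := F S) hmono (hF.nonneg (insert v T))
      (hF.antitone (insert_subset_insert v hST)) (hF.antitone (subset_insert v T))
      (by linarith [hF.supermodular hST v hvT])
    linarith

theorem rpow (hF : IsNonnegAntitoneSupermodular F) {p : ℝ} (hp : 1 ≤ p) :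
    IsNonnegAntitoneSupermodular fun S => F S ^ p :=
  hF.comp (convexOn_rpow hp) (Real.monotoneOn_rpow_Ici_of_exponent_nonneg (by linarith))
    fun _ hx => Real.rpow_nonneg hx p

variable {n : Type*} [Fintype n] {M N : Finset α → Matrix n n ℝ}

theorem matrix_mul_apply (hM : ∀ i j, IsNonnegAntitoneSupermodular fun S => M S i j)
    (hN : ∀ i j, IsNonnegAntitoneSupermodular fun S => N S i j) (i j : n) :
    IsNonnegAntitoneSupermodular fun S => (M S * N S) i j := by
  simp only [Matrix.mul_apply]
  exact sum fun k _ => (hM i k).mul (hN k j)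

theorem matrix_pow_apply [DecidableEq n]
    (hM : ∀ i j, IsNonnegAntitoneSupermodular fun S => M S i j) (k : ℕ) (i j : n) :
    IsNonnegAntitoneSupermodular fun S => (M S ^ k) i j := by
  induction k generalizing i j with
  | zero =>
    simp only [pow_zero, Matrix.one_apply]
    exact const (by split_ifs <;> norm_num)
  | succ k ih =>
    simp only [pow_succ]
    exact matrix_mul_apply ih hM i j

end IsNonnegAntitoneSupermodular

end SetFunction

section Absorb

variable {V : Type*} [DecidableEq V]

def projCompl (S : Finset V) : Matrix V V ℝ :=
  diagonal fun i => if i ∈ S then 0 else 1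

theorem projCompl_mul_self [Fintype V] (S : Finset V) :
    projCompl S * projCompl S = projCompl S := by
  simp only [projCompl, diagonal_mul_diagonal]
  congr 1; ext i; split_ifs <;> norm_num

theorem projCompl_mul_mul_projCompl_apply [Fintype V] (S : Finset V) (M : Matrix V V ℝ)
    (i j : V) :
    (projCompl S * M * projCompl S) i j = if i ∈ S ∨ j ∈ S then 0 else M i j := by
  simp only [projCompl, diagonal_mul, mul_diagonal]
  by_cases hi : i ∈ S <;> by_cases hj : j ∈ S <;> simp [hi, hj]

theorem isNonnegAntitoneSupermodular_projCompl_apply (i j : V) :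
    IsNonnegAntitoneSupermodular fun S => projCompl S i j := by
  by_cases hij : i = j
  · subst hij
    simpa [projCompl] using IsNonnegAntitoneSupermodular.ite_mem i
  · simpa [projCompl, hij] using IsNonnegAntitoneSupermodular.const (α := V) le_rfl

theorem absorb_mul_projCompl [Fintype V] (P : Matrix V V ℝ) (S : Finset V) :
    absorb P S * projCompl S = projCompl S * P * projCompl S := by
  ext i j
  rw [projCompl_mul_mul_projCompl_apply]
  simp only [absorb, projCompl, mul_diagonal, of_apply]
  by_cases hi : i ∈ S <;> by_cases hj : j ∈ S
  all_goals simp only [hi, hj, if_true, if_false, or_true, or_false, mul_zero, mul_one]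
  exact if_neg fun h : i = j => hj (h ▸ hi)

theorem projCompl_mul_absorb_pow_mul_projCompl [Fintype V] (P : Matrix V V ℝ) (S : Finset V)
    (k : ℕ) :
    projCompl S * absorb P S ^ k * projCompl S
      = (projCompl S * P * projCompl S) ^ k * projCompl S := by
  induction k with
  | zero => simp [projCompl_mul_self]
  | succ k ih =>
    calc projCompl S * absorb P S ^ (k + 1) * projCompl S
        = projCompl S * absorb P S ^ k * (absorb P S * projCompl S) := by
          simp only [pow_succ, Matrix.mul_assoc]
      _ = projCompl S * absorb P S ^ k * projCompl S * P * projCompl S := by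
          simp only [absorb_mul_projCompl, Matrix.mul_assoc]
      _ = (projCompl S * P * projCompl S) ^ (k + 1) * projCompl S := by
          simp only [ih, pow_succ, Matrix.mul_assoc, projCompl_mul_self]

theorem sum_compl_eq_sum_projCompl_mul_mul_projCompl [Fintype V] (S : Finset V)
    (M : Matrix V V ℝ) {φ : ℝ → ℝ} (hφ : φ 0 = 0) :
    ∑ i ∈ Sᶜ, (∑ j ∈ Sᶜ, φ (M i j) + φ (∑ j ∈ Sᶜ, M i j))
      = ∑ i, (∑ j, φ ((projCompl S * M * projCompl S) i j)
          + φ (∑ j, (projCompl S * M * projCompl S) i j)) := by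
  set G := projCompl S * M * projCompl S
  have hG : ∀ i j, G i j = if i ∈ S ∨ j ∈ S then 0 else M i j :=
    projCompl_mul_mul_projCompl_apply S M
  have hrow : ∀ i ∉ S, ∀ f : ℝ → ℝ, f 0 = 0 → ∑ j ∈ Sᶜ, f (M i j) = ∑ j, f (G i j) := by
    intro i hi f hf
    rw [← sum_subset (subset_univ Sᶜ) fun j _ hj => by simp_all]
    exact sum_congr rfl fun j hj => by simp_all
  rw [← sum_subset (subset_univ Sᶜ) fun i _ hi => by simp_all]
  refine sum_congr rfl fun i hi => ?_
  rw [mem_compl] at hi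
  rw [hrow i hi φ hφ, hrow i hi (fun x => x) rfl]

-- The paper's `g_{ij}(S) = (P_S^k)_{ij}` for `i, j ∉ S`, extended by `0` where `i ∈ S` or `j ∈ S`.
def transientPow [Fintype V] (P : Matrix V V ℝ) (S : Finset V) (k : ℕ) : Matrix V V ℝ :=
  projCompl S * absorb P S ^ k * projCompl S

theorem isNonnegAntitoneSupermodular_transientPow_apply [Fintype V] {P : Matrix V V ℝ}
    (hP : ∀ i j, 0 ≤ P i j) (k : ℕ) (i j : V) :
    IsNonnegAntitoneSupermodular fun S => transientPow P S k i j := by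
  simp only [transientPow, projCompl_mul_absorb_pow_mul_projCompl]
  have hD := isNonnegAntitoneSupermodular_projCompl_apply (V := V)
  have hDPD := IsNonnegAntitoneSupermodular.matrix_mul_apply
    (IsNonnegAntitoneSupermodular.matrix_mul_apply hD
      fun i j => IsNonnegAntitoneSupermodular.const (c := P i j) (hP i j)) hD
  exact .matrix_mul_apply (.matrix_pow_apply hDPD k) hD i j

end Absorb

theorem convergence_error_bound_supermodular_general {V : Type*} [Fintype V] [DecidableEq V]
    (P : Matrix V V ℝ)
    (hnonneg : ∀ i j, 0 ≤ P i j)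
    (τ : ℕ) (p : ℝ) (hp : 1 ≤ p)
    (fhat : Finset V → ℝ)
    (hfhat : ∀ S : Finset V, fhat S =
      ∑ i ∈ Sᶜ, ((∑ j ∈ Sᶜ, (((absorb P S) ^ τ) i j) ^ p) +
        (∑ j ∈ Sᶜ, ((absorb P S) ^ τ) i j) ^ p)) :
    ∀ S T : Finset V, S ⊆ T → ∀ v ∉ T,
      fhat S - fhat (insert v S) ≥ fhat T - fhat (insert v T) := by
  have hfhat_transient : ∀ S, fhat S = ∑ i, (∑ j, transientPow P S τ i j ^ p
      + (∑ j, transientPow P S τ i j) ^ p) := fun S => by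
    rw [hfhat, sum_compl_eq_sum_projCompl_mul_mul_projCompl S _
      (φ := fun x => x ^ p) (Real.zero_rpow (by linarith))]
    rfl
  have hg := isNonnegAntitoneSupermodular_transientPow_apply hnonneg τ
  have hF : IsNonnegAntitoneSupermodular fun S => ∑ i, (∑ j, transientPow P S τ i j ^ p
      + (∑ j, transientPow P S τ i j) ^ p) :=
    .sum fun i _ => (IsNonnegAntitoneSupermodular.sum fun j _ => (hg i j).rpow hp).add
      ((IsNonnegAntitoneSupermodular.sum fun j _ => hg i j).rpow hp)
  intro S T hST v hvT
  have := hF.supermodular hST v hvT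
  simp only [← hfhat_transient] at this
  linarith

/-- The convergence error bound
`f̂(S) = ∑_{i∉S} [ ∑_{j∉S} g_{ij}(S)^p + h_i(S)^p ]`, where `g_{ij}(S) = (P_S^τ)_{ij}`
and `h_i(S) = ∑_{j∉S} (P_S^τ)_{ij}`, is a supermodular function of the input set `S`. -/
theorem convergence_error_bound_supermodular {V : Type*} [Fintype V] [DecidableEq V]
    (P : Matrix V V ℝ)
    (hnonneg : ∀ i j, 0 ≤ P i j)
    (hrowsum : ∀ i, ∑ j, P i j = 1)
    (τ : ℕ) (p : ℝ) (hp : 1 ≤ p)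
    (fhat : Finset V → ℝ)
    (hfhat : ∀ S : Finset V, fhat S =
      ∑ i ∈ Sᶜ, ((∑ j ∈ Sᶜ, (((absorb P S) ^ τ) i j) ^ p) +
        (∑ j ∈ Sᶜ, ((absorb P S) ^ τ) i j) ^ p)) :
    ∀ S T : Finset V, S ⊆ T → ∀ v ∉ T,
      fhat S - fhat (insert v S) ≥ fhat T - fhat (insert v T) :=
  convergence_error_bound_supermodular_general P hnonneg τ p hp fhat hfhat
end

section
/- Let G = (V,E) be a finite directed graph, S ⊆ V an input set, and F = V \ S with m = |F| ≥ 1. Suppose that either (i) some node of F is not reachable by a directed path in G from any node of S, or (ii) there is a dilation: a subset A ⊆ F with |N(A)| < |A|, where N(A) = { j ∈ V : (j,i) ∈ E for some i ∈ A }. Then for every choice of matrices A ∈ ℝ^{F×F} and B ∈ ℝ^{F×S} with A_{ij} ≠ 0 only if (j,i) ∈ E and B_{ij} ≠ 0 only if (j,i) ∈ E, the controllability matrix [B, AB, A²B, …, A^{m-1}B] has rank strictly less than m. -/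
/-! If a node `i ∉ S` is inaccessible, `(AᵏB)ᵢₛ ≠ 0` would give a path from `s` to `i`, so the
row `i` of the controllability matrix vanishes. If `D` is a dilation, the rows of `[A B]` indexed
by `D` are supported on the `|N(D)| < |D|` columns of `N(D)`, hence dependent: some `z ≠ 0` has
`zA = 0` and `zB = 0`, so `z` annihilates every `AᵏB`. Either way the rows of the controllability
matrix are dependent. -/

open Matrix

namespace Matrix

section Field

variable {m n K : Type*} [Fintype m] [Field K]

theorem rank_lt_card_height_of_vecMul_eq_zero [Fintype n] {M : Matrix m n K} {z : m → K}
    (hz : z ≠ 0) (h : z ᵥ* M = 0) : M.rank < Fintype.card m := by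
  refine M.rank_le_card_height.lt_of_ne fun hrank => hz ?_
  have hli : LinearIndependent K M.row :=
    linearIndependent_iff_card_eq_finrank_span.mpr (hrank.symm.trans M.rank_eq_finrank_span_row)
  exact funext (Fintype.linearIndependent_iff.mp hli z ((vecMul_eq_sum z M).symm.trans h))

theorem exists_ne_zero_vecMul_eq_zero_of_ncard_lt [Finite n] (M : Matrix m n K) (s : Finset m)
    (hs : {j | ∃ i ∈ s, M i j ≠ 0}.ncard < s.card) : ∃ z : m → K, z ≠ 0 ∧ z ᵥ* M = 0 := by
  classical
  have := Fintype.ofFinite n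
  set N := {j | ∃ i ∈ s, M i j ≠ 0}
  -- A `z` vanishing off `s` and annihilating the columns in `N` annihilates `M`,
  -- and these are `#N + (|m| - #s) < |m|` linear conditions.
  let f : (m → K) →ₗ[K] (N → K) × ({i // i ∉ s} → K) :=
    (LinearMap.funLeft K K Subtype.val ∘ₗ M.vecMulLinear).prod (LinearMap.funLeft K K Subtype.val)
  have hker : LinearMap.ker f ≠ ⊥ := by
    refine LinearMap.ker_ne_bot_of_finrank_lt ?_
    have hsm : s.card ≤ Fintype.card m := s.card_le_univ
    rw [Module.finrank_prod, Module.finrank_fintype_fun_eq_card, Module.finrank_fintype_fun_eq_card,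
      Module.finrank_fintype_fun_eq_card, Fintype.card_subtype_compl, Fintype.card_coe,
      ← Nat.card_eq_fintype_card, Nat.card_coe_set_eq]
    omega
  obtain ⟨z, hzf, hz⟩ := Submodule.exists_mem_ne_zero_of_ne_bot hker
  refine ⟨z, hz, funext fun j => ?_⟩
  by_cases hj : j ∈ N
  · exact congrFun (congrArg Prod.fst hzf) ⟨j, hj⟩
  · refine Finset.sum_eq_zero fun i _ => show z i * M i j = 0 from ?_
    by_cases hi : i ∈ s
    · rw [not_ne_iff.mp fun hij => hj ⟨i, hi, hij⟩, mul_zero]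
    · have hzi : z i = 0 := congrFun (congrArg Prod.snd hzf) ⟨i, hi⟩
      rw [hzi, zero_mul]

end Field

section Control

variable {ι κ R : Type*} [Fintype ι] [DecidableEq ι]

def controllabilityMatrix [Semiring R] (A : Matrix ι ι R) (B : Matrix ι κ R) (k : ℕ) :
    Matrix ι (Fin k × κ) R :=
  of fun i p => (A ^ (p.1 : ℕ) * B) i p.2

theorem vecMul_pow_mul_eq_zero [Semiring R] {A : Matrix ι ι R} {B : Matrix ι κ R} {z : ι → R}
    (hA : z ᵥ* A = 0) (hB : z ᵥ* B = 0) : ∀ k : ℕ, z ᵥ* (A ^ k * B) = 0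
  | 0 => by rwa [pow_zero, Matrix.one_mul]
  | k + 1 => by rw [pow_succ', Matrix.mul_assoc, ← vecMul_vecMul, hA, zero_vecMul]

theorem rank_controllabilityMatrix_lt_of_vecMul_eq_zero [Field R] [Fintype κ]
    {A : Matrix ι ι R} {B : Matrix ι κ R} {z : ι → R} (hz : z ≠ 0)
    (h : ∀ k : ℕ, z ᵥ* (A ^ k * B) = 0) (k : ℕ) :
    (controllabilityMatrix A B k).rank < Fintype.card ι :=
  rank_lt_card_height_of_vecMul_eq_zero hz (funext fun p => congrFun (h p.1) p.2)

theorem transGen_of_pow_mul_apply_ne_zero [Semiring R] {V : Type*} (r : V → V → Prop)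
    (f : ι → V) (g : κ → V) {A : Matrix ι ι R} {B : Matrix ι κ R}
    (hA : ∀ i j, A i j ≠ 0 → r (f j) (f i)) (hB : ∀ i s, B i s ≠ 0 → r (g s) (f i)) (k : ℕ)
    (i : ι) (s : κ) (h : (A ^ k * B) i s ≠ 0) : Relation.TransGen r (g s) (f i) := by
  induction k generalizing i with
  | zero => exact .single (hB i s (by simpa using h))
  | succ k ih =>
    rw [pow_succ', Matrix.mul_assoc, mul_apply] at h
    obtain ⟨j, -, hj⟩ := Finset.exists_ne_zero_of_sum_ne_zero h
    exact (ih j (right_ne_zero_of_mul hj)).tail (hA i j (left_ne_zero_of_mul hj))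

end Control

end Matrix

theorem exists_ne_zero_vecMul_eq_zero_of_dilation {V K : Type*} [Fintype V] [DecidableEq V]
    [Field K] (E : V → V → Prop) {S : Finset V} {A : Matrix {v // v ∉ S} {v // v ∉ S} K}
    {B : Matrix {v // v ∉ S} {v // v ∈ S} K}
    (hA : ∀ i j, A i j ≠ 0 → E j.1 i.1) (hB : ∀ i j, B i j ≠ 0 → E j.1 i.1)
    {D : Finset V} (hDS : ∀ a ∈ D, a ∉ S) (hdil : {j | ∃ i ∈ D, E j i}.ncard < D.card) :
    ∃ z ≠ 0, z ᵥ* A = 0 ∧ z ᵥ* B = 0 := by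
  have hcard : (D.subtype (· ∉ S)).card = D.card := by
    rw [Finset.card_subtype, Finset.filter_true_of_mem hDS]
  have hinj : Function.Injective (Sum.elim (Subtype.val : {v // v ∉ S} → V) Subtype.val) :=
    Subtype.val_injective.sumElim Subtype.val_injective fun a b h => a.2 (h ▸ b.2)
  have hN : {c | ∃ i ∈ D.subtype (· ∉ S), fromCols A B i c ≠ 0}.ncard
      < (D.subtype (· ∉ S)).card := by
    refine lt_of_le_of_lt (Set.ncard_le_ncard_of_injOn _ ?_ hinj.injOn) (hcard ▸ hdil)
    rintro (j | s) ⟨i, hi, hij⟩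
    · exact ⟨i, Finset.mem_subtype.mp hi, hA i j hij⟩
    · exact ⟨i, Finset.mem_subtype.mp hi, hB i s hij⟩
  obtain ⟨z, hz, hzM⟩ := (fromCols A B).exists_ne_zero_vecMul_eq_zero_of_ncard_lt _ hN
  rw [vecMul_fromCols] at hzM
  exact ⟨z, hz, funext fun j => congrFun hzM (.inl j), funext fun s => congrFun hzM (.inr s)⟩

theorem not_structurally_controllable_of_inaccessible_or_dilation_general
    {V : Type*} [Fintype V] [DecidableEq V]
    (E : V → V → Prop) (S : Finset V)
    (hbad : (∃ i : V, i ∉ S ∧ ∀ s ∈ S, ¬ Relation.ReflTransGen E s i) ∨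
      (∃ A : Finset V, (∀ a ∈ A, a ∉ S) ∧
        Set.ncard {j : V | ∃ i ∈ A, E j i} < A.card)) :
    ∀ (A : Matrix {v : V // v ∉ S} {v : V // v ∉ S} ℝ)
      (B : Matrix {v : V // v ∉ S} {v : V // v ∈ S} ℝ),
      (∀ i j, A i j ≠ 0 → E j.1 i.1) →
      (∀ i j, B i j ≠ 0 → E j.1 i.1) →
      (Matrix.of fun (i : {v : V // v ∉ S})
          (p : Fin (Fintype.card {v : V // v ∉ S}) × {v : V // v ∈ S}) =>
            (A ^ (p.1 : ℕ) * B) i p.2).rank < Fintype.card {v : V // v ∉ S} := by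
  intro A B hA hB
  suffices ∃ z ≠ 0, ∀ k : ℕ, z ᵥ* (A ^ k * B) = 0 by
    obtain ⟨z, hz, hzk⟩ := this
    exact rank_controllabilityMatrix_lt_of_vecMul_eq_zero hz hzk _
  rcases hbad with ⟨i, hiS, hi⟩ | ⟨D, hDS, hdil⟩
  · refine ⟨Pi.single ⟨i, hiS⟩ 1, by simp, fun k => funext fun s => ?_⟩
    rw [single_one_vecMul]
    by_contra h
    exact hi s s.2
      (transGen_of_pow_mul_apply_ne_zero E Subtype.val Subtype.val hA hB k _ s h).to_reflTransGen
  · obtain ⟨z, hz, hzA, hzB⟩ := exists_ne_zero_vecMul_eq_zero_of_dilation E hA hB hDS hdil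
    exact ⟨z, hz, vecMul_pow_mul_eq_zero hzA hzB⟩

/-- Lin's structural controllability theorem (necessity): if some non-input node is not
accessible from the input set `S`, or the network contains a dilation, then every choice
of weights `A`, `B` compatible with the edge pattern of the directed graph `E` yields a
controllability matrix `[B, AB, …, A^{m-1}B]` of rank strictly less than `m = |V \ S|`. -/
theorem not_structurally_controllable_of_inaccessible_or_dilation
    {V : Type*} [Fintype V] [DecidableEq V]
    (E : V → V → Prop) (S : Finset V)
    (hF : 1 ≤ Fintype.card {v : V // v ∉ S})
    (hbad : (∃ i : V, i ∉ S ∧ ∀ s ∈ S, ¬ Relation.ReflTransGen E s i) ∨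
      (∃ A : Finset V, (∀ a ∈ A, a ∉ S) ∧
        Set.ncard {j : V | ∃ i ∈ A, E j i} < A.card)) :
    ∀ (A : Matrix {v : V // v ∉ S} {v : V // v ∉ S} ℝ)
      (B : Matrix {v : V // v ∉ S} {v : V // v ∈ S} ℝ),
      (∀ i j, A i j ≠ 0 → E j.1 i.1) →
      (∀ i j, B i j ≠ 0 → E j.1 i.1) →
      (Matrix.of fun (i : {v : V // v ∉ S})
          (p : Fin (Fintype.card {v : V // v ∉ S}) × {v : V // v ∈ S}) =>
            (A ^ (p.1 : ℕ) * B) i p.2).rank < Fintype.card {v : V // v ∉ S} :=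
  not_structurally_controllable_of_inaccessible_or_dilation_general E S hbad
end

section
/- Let V be a finite set, k ≥ 1 an integer, and f a monotone nondecreasing submodular set function on subsets of V with f(∅) = 0. Let ∅ = S₀ ⊆ S₁ ⊆ … ⊆ S_k be a greedy chain: for each t, S_t = S_{t-1} ∪ {v_t} where v_t maximizes f(S_{t-1} ∪ {v}) over all v ∈ V. Then f(S_k) ≥ (1 - 1/e) · max{ f(T) : T ⊆ V, |T| ≤ k }. -/
/-!
Let `T` be any set of at most `k` elements and `S` the current greedy set. Submodularity bounds
the gain `f (S ∪ T) - f S` by the sum of the single-element gains over `T`, each of which is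
at most the greedy gain; with monotonicity this gives `f T - f S ≤ k · (greedy gain)`. So
each greedy step shrinks the gap `f T - f S` by a factor `1 - 1/k`, and after `k` steps the
gap is at most `(1 - 1/k)^k f T ≤ f T / e`.
-/

section Submodular

variable {V : Type*} [DecidableEq V] (f : Finset V → ℝ)

theorem sub_le_sum_insert_sub_of_submodular
    (hsub : ∀ S T : Finset V, S ⊆ T → ∀ v ∉ T,
      f (insert v S) - f S ≥ f (insert v T) - f T)
    (S A : Finset V) : f (S ∪ A) - f S ≤ ∑ v ∈ A, (f (insert v S) - f S) := by
  induction A using Finset.induction_on with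
  | empty => simp
  | insert a A haA ih =>
    rw [Finset.union_insert, Finset.sum_insert haA]
    by_cases haS : a ∈ S
    · rw [Finset.insert_eq_self.mpr (Finset.mem_union_left A haS),
        Finset.insert_eq_self.mpr haS]
      linarith
    · have haSA : a ∉ S ∪ A := by simp [haS, haA]
      linarith [hsub S (S ∪ A) Finset.subset_union_left a haSA]

theorem sub_le_mul_greedy_gain
    (hmono : ∀ S T : Finset V, S ⊆ T → f S ≤ f T)
    (hsub : ∀ S T : Finset V, S ⊆ T → ∀ v ∉ T,
      f (insert v S) - f S ≥ f (insert v T) - f T)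
    {S T : Finset V} {v : V} {k : ℕ} (hT : T.card ≤ k)
    (hv : ∀ w : V, f (insert w S) ≤ f (insert v S)) :
    f T - f S ≤ k * (f (insert v S) - f S) := by
  have hgain : 0 ≤ f (insert v S) - f S := sub_nonneg.mpr (hmono _ _ (Finset.subset_insert v S))
  calc f T - f S ≤ f (S ∪ T) - f S :=
        sub_le_sub_right (hmono _ _ Finset.subset_union_right) _
    _ ≤ ∑ w ∈ T, (f (insert w S) - f S) := sub_le_sum_insert_sub_of_submodular f hsub S T
    _ ≤ T.card • (f (insert v S) - f S) :=
        Finset.sum_le_card_nsmul _ _ _ fun w _ ↦ sub_le_sub_right (hv w) _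
    _ ≤ k * (f (insert v S) - f S) := by
        rw [nsmul_eq_mul]; gcongr

theorem sub_insert_greedy_le
    (hmono : ∀ S T : Finset V, S ⊆ T → f S ≤ f T)
    (hsub : ∀ S T : Finset V, S ⊆ T → ∀ v ∉ T,
      f (insert v S) - f S ≥ f (insert v T) - f T)
    {S T : Finset V} {v : V} {k : ℕ} (hk : 0 < k) (hT : T.card ≤ k)
    (hv : ∀ w : V, f (insert w S) ≤ f (insert v S)) :
    f T - f (insert v S) ≤ (1 - 1 / k) * (f T - f S) := by
  have hgap : (f T - f S) / k ≤ f (insert v S) - f S := by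
    rw [div_le_iff₀ (by exact_mod_cast hk)]
    linarith [sub_le_mul_greedy_gain f hmono hsub hT hv]
  rw [one_sub_mul, one_div_mul_eq_div]
  linarith

end Submodular

theorem greedy_cardinality_bound_general {V : Type*} [DecidableEq V]
    (k : ℕ) (hk : 1 ≤ k)
    (f : Finset V → ℝ)
    (hmono : ∀ S T : Finset V, S ⊆ T → f S ≤ f T)
    (hsub : ∀ S T : Finset V, S ⊆ T → ∀ v ∉ T,
      f (insert v S) - f S ≥ f (insert v T) - f T)
    (hf0 : f ∅ = 0)
    (g : ℕ → Finset V) (hg0 : g 0 = ∅)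
    (hgreedy : ∀ t < k, ∃ v : V, g (t + 1) = insert v (g t) ∧
      ∀ w : V, f (insert w (g t)) ≤ f (insert v (g t))) :
    ∀ T : Finset V, T.card ≤ k → (1 - 1 / Real.exp 1) * f T ≤ f (g k) := by
  intro T hT
  have hfT : 0 ≤ f T := hf0 ▸ hmono ∅ T (Finset.empty_subset T)
  have hratio : 0 ≤ 1 - 1 / (k : ℝ) :=
    sub_nonneg.mpr (div_le_one_of_le₀ (by exact_mod_cast hk) (Nat.cast_nonneg k))
  have hgap : f T - f (g k) ≤ (1 - 1 / (k : ℝ)) ^ k * f T := by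
    simpa [hg0, hf0] using le_geom (u := fun t ↦ f T - f (g t)) hratio k fun t ht ↦ by
      obtain ⟨v, hgv, hv⟩ := hgreedy t ht
      simpa only [hgv] using sub_insert_greedy_le f hmono hsub hk hT hv
  have hexp : (1 - 1 / (k : ℝ)) ^ k ≤ 1 / Real.exp 1 := by
    simpa [Real.exp_neg] using
      Real.one_sub_div_pow_le_exp_neg (n := k) (t := 1) (by exact_mod_cast hk)
  linarith [mul_le_mul_of_nonneg_right hexp hfT]

/-- Nemhauser–Wolsey–Fisher guarantee: greedy maximization of a monotone nondecreasing
submodular function with `f ∅ = 0` subject to a cardinality constraint `k` achieves at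
least a `(1 - 1/e)` fraction of the optimum. -/
theorem greedy_cardinality_bound {V : Type*} [Fintype V] [DecidableEq V]
    (k : ℕ) (hk : 1 ≤ k)
    (f : Finset V → ℝ)
    (hmono : ∀ S T : Finset V, S ⊆ T → f S ≤ f T)
    (hsub : ∀ S T : Finset V, S ⊆ T → ∀ v ∉ T,
      f (insert v S) - f S ≥ f (insert v T) - f T)
    (hf0 : f ∅ = 0)
    (g : ℕ → Finset V) (hg0 : g 0 = ∅)
    (hgreedy : ∀ t < k, ∃ v : V, g (t + 1) = insert v (g t) ∧
      ∀ w : V, f (insert w (g t)) ≤ f (insert v (g t))) :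
    ∀ T : Finset V, T.card ≤ k → (1 - 1 / Real.exp 1) * f T ≤ f (g k) :=
  greedy_cardinality_bound_general k hk f hmono hsub hf0 g hg0 hgreedy
end

section
/- Let V be a finite set, f a monotone nonincreasing supermodular set function on subsets of V, and g : ℝ → ℝ a nondecreasing convex function. Then the composition h(S) = g(f(S)) is supermodular: for all S ⊆ T ⊆ V and v ∈ V \ T, h(S ∪ {v}) - h(S) ≤ h(T ∪ {v}) - h(T). -/
/-! Put `d = f T - f (insert v T) ≥ 0`. Convexity makes the increment `x ↦ g (x + d) - g x`
nondecreasing, and `f (insert v T) ≤ f (insert v S)` by monotonicity of `f`, so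
`g (f T) - g (f (insert v T)) ≤ g (f (insert v S) + d) - g (f (insert v S))`.
Supermodularity of `f` says `f (insert v S) + d ≤ f S`, and `g` is nondecreasing. -/

/-- `x + d` and `y` lie between `x` and `y + d` and have the same sum, so Jensen's inequality at
the two convex combinations `x + d = (1 - t) x + t (y + d)` and `y = t x + (1 - t) (y + d)`, with
`t = d / (y + d - x)`, adds up to `g (x + d) + g y ≤ g x + g (y + d)`. -/
theorem ConvexOn.map_add_sub_map_le {𝕜 β : Type*} [Field 𝕜] [LinearOrder 𝕜]
    [IsStrictOrderedRing 𝕜] [AddCommGroup β] [PartialOrder β] [IsOrderedAddMonoid β]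
    [Module 𝕜 β] [PosSMulMono 𝕜 β] {s : Set 𝕜} {g : 𝕜 → β} (hg : ConvexOn 𝕜 s g)
    {x y d : 𝕜} (hx : x ∈ s) (hyd : y + d ∈ s) (hxy : x ≤ y) (hd : 0 ≤ d) :
    g (x + d) - g x ≤ g (y + d) - g y := by
  rcases (show x ≤ y + d by linarith).eq_or_lt with hL | hL
  · obtain ⟨rfl, rfl⟩ : x = y ∧ d = 0 := by constructor <;> linarith
    simp
  set L := y + d - x
  replace hL : 0 < L := sub_pos.2 hL
  have ht : 0 ≤ d / L := div_nonneg hd hL.le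
  have ht' : 0 ≤ (y - x) / L := div_nonneg (by linarith) hL.le
  have hsum : (y - x) / L + d / L = 1 := by field_simp; ring
  have hxd : g (x + d) ≤ ((y - x) / L) • g x + (d / L) • g (y + d) := by
    convert hg.2 hx hyd ht' ht hsum using 2
    simp only [smul_eq_mul]; field_simp; ring
  have hy : g y ≤ (d / L) • g x + ((y - x) / L) • g (y + d) := by
    convert hg.2 hx hyd ht ht' (by rw [add_comm, hsum]) using 2
    simp only [smul_eq_mul]; field_simp; ring
  have hcomb : ((y - x) / L) • g x + (d / L) • g (y + d) +
      ((d / L) • g x + ((y - x) / L) • g (y + d)) = g x + g (y + d) := by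
    rw [add_add_add_comm, ← add_smul, ← add_smul, add_comm (d / L), hsum, one_smul, one_smul]
  rw [sub_le_sub_iff, add_comm (g (y + d)), ← hcomb]
  exact add_le_add hxd hy

/-- The composition of a nondecreasing convex function `g : ℝ → ℝ` with a monotone
nonincreasing supermodular set function `f` is supermodular. -/
theorem convex_comp_supermodular {V : Type*} [DecidableEq V]
    (f : Finset V → ℝ)
    (hmono : ∀ S T : Finset V, S ⊆ T → f S ≥ f T)
    (hsuper : ∀ S T : Finset V, S ⊆ T → ∀ v ∉ T,
      f (insert v S) - f S ≤ f (insert v T) - f T)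
    (g : ℝ → ℝ) (hg_mono : Monotone g) (hg_conv : ConvexOn ℝ Set.univ g) :
    ∀ S T : Finset V, S ⊆ T → ∀ v ∉ T,
      g (f (insert v S)) - g (f S) ≤ g (f (insert v T)) - g (f T) := by
  intro S T hST v hv
  set d := f T - f (insert v T)
  have hd : 0 ≤ d := sub_nonneg.2 (hmono _ _ (Finset.subset_insert v T))
  have hvTS : f (insert v T) ≤ f (insert v S) := hmono _ _ (Finset.insert_subset_insert v hST)
  have hshift : f (insert v S) + d ≤ f S := by linarith [hsuper S T hST v hv]
  have hincr : g (f (insert v T) + d) - g (f (insert v T)) ≤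
      g (f (insert v S) + d) - g (f (insert v S)) :=
    hg_conv.map_add_sub_map_le trivial trivial hvTS hd
  rw [add_sub_cancel] at hincr
  linarith [hg_mono hshift]
end
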